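/- arXiv:2408.16855 — 3 statements merged into one kernel-verified Lean document; each statement's English description precedes it below -/
import Mathlib

section
/- Suppose γ evolves by the framed curvature flow with an additional tangential velocity, i.e. ∂_t γ = cos θ · ∂_s²γ + sin θ · (∂_sγ × ∂_s²γ) + υ_T · ∂_sγ, where for every t and u the tangential velocity satisfies υ_T(t,u) = c(t) + ∫₀ᵘ κ² cos θ · g dū − (s(t,u)/L(Γ_t)) ∫₀^{2π} κ² cos θ · g dū, with s(t,u) := ∫₀ᵘ g(t,ū) dū the arclength parameter and c : [0,T̄) → ℝ any differentiable function. Then the quantity g(t,u)/L(Γ_t) is constant in time, i.e. ∂_t ( g(t,u)/L(Γ_t) ) = 0 for all (t,u). -/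
noncomputable section

open Real MeasureTheory
open scoped RealInnerProductSpace

/-- Euclidean 3-space. -/
abbrev E3 : Type := EuclideanSpace ℝ (Fin 3)

/-- The cross product in `ℝ³`. -/
def cross (a b : E3) : E3 :=
  WithLp.toLp 2 ![a 1 * b 2 - a 2 * b 1, a 2 * b 0 - a 0 * b 2, a 0 * b 1 - a 1 * b 0]

/-- Partial derivative in the first (time) variable, vector valued. -/
def pt (f : ℝ → ℝ → E3) (t u : ℝ) : E3 := deriv (fun t' => f t' u) t

/-- Partial derivative in the second (space) variable, vector valued. -/
def pu (f : ℝ → ℝ → E3) (t u : ℝ) : E3 := deriv (fun u' => f t u') u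

/-- Partial derivative in the first (time) variable, scalar valued. -/
def ptR (f : ℝ → ℝ → ℝ) (t u : ℝ) : ℝ := deriv (fun t' => f t' u) t

/-- Partial derivative in the second (space) variable, scalar valued. -/
def puR (f : ℝ → ℝ → ℝ) (t u : ℝ) : ℝ := deriv (fun u' => f t u') u

/-- The local rate of parametrization `g := ‖∂ᵤ γ‖`. -/
def pg (γ : ℝ → ℝ → E3) (t u : ℝ) : ℝ := ‖pu γ t u‖

/-- Arclength derivative `∂ₛ := g⁻¹ ∂ᵤ` of a vector field along `γ`. -/
def ds (γ f : ℝ → ℝ → E3) (t u : ℝ) : E3 := (pg γ t u)⁻¹ • pu f t u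

/-- Arclength derivative `∂ₛ := g⁻¹ ∂ᵤ` of a scalar field along `γ`. -/
def dsR (γ : ℝ → ℝ → E3) (f : ℝ → ℝ → ℝ) (t u : ℝ) : ℝ := (pg γ t u)⁻¹ * puR f t u

/-- The unit tangent `T := ∂ₛ γ`. -/
def tang (γ : ℝ → ℝ → E3) : ℝ → ℝ → E3 := ds γ γ

/-- The curvature `κ := ‖∂ₛ² γ‖`. -/
def curv (γ : ℝ → ℝ → E3) (t u : ℝ) : ℝ := ‖ds γ (tang γ) t u‖

/-- The Frenet normal `N := κ⁻¹ ∂ₛ² γ`. -/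
def fN (γ : ℝ → ℝ → E3) (t u : ℝ) : E3 := (curv γ t u)⁻¹ • ds γ (tang γ) t u

/-- The Frenet binormal `B := T × N`. -/
def fB (γ : ℝ → ℝ → E3) (t u : ℝ) : E3 := cross (tang γ t u) (fN γ t u)

/-- The torsion `τ := ⟨∂ₛ N, B⟩`. -/
def tors (γ : ℝ → ℝ → E3) (t u : ℝ) : ℝ := ⟪ds γ (fN γ) t u, fB γ t u⟫

/-- The velocity `cos θ ∂ₛ²γ + sin θ (∂ₛγ × ∂ₛ²γ)` of the framed curvature flow. -/
def fcfVel (γ : ℝ → ℝ → E3) (θ : ℝ → ℝ → ℝ) (t u : ℝ) : E3 :=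
  Real.cos (θ t u) • ds γ (tang γ) t u +
    Real.sin (θ t u) • cross (tang γ t u) (ds γ (tang γ) t u)

/-- The length `L(Γ_t) := ∫₀^{2π} g du`. -/
def len (γ : ℝ → ℝ → E3) (t : ℝ) : ℝ := ∫ u in (0:ℝ)..(2 * π), pg γ t u

/-! ### Auxiliary lemmas -/

section FCFAux

open Function

theorem FCF_cross_inner_left (a b : E3) : ⟪cross a b, a⟫ = 0 := by
  simp [PiLp.inner_apply, Fin.sum_univ_three, RCLike.inner_apply, conj_trivial, cross]; ring

theorem FCF_cross_inner_right (a b : E3) : ⟪cross a b, b⟫ = 0 := by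
  simp [PiLp.inner_apply, Fin.sum_univ_three, RCLike.inner_apply, conj_trivial, cross]; ring

variable {F : Type*} [NormedAddCommGroup F] [NormedSpace ℝ F]

theorem FCF_slice_u (f : ℝ → ℝ → F) (hf : ContDiff ℝ (⊤:ℕ∞) (uncurry f)) (t u : ℝ) :
    HasDerivAt (fun u' => f t u') (fderiv ℝ (uncurry f) (t, u) (0, 1)) u := by
  have hline : HasDerivAt (fun u' : ℝ => ((t, u') : ℝ × ℝ)) ((0:ℝ), (1:ℝ)) u :=
    HasDerivAt.prodMk (hasDerivAt_const _ _) (hasDerivAt_id _)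
  exact ((hf.differentiable (by simp) (t, u)).hasFDerivAt).comp_hasDerivAt u hline

theorem FCF_slice_t (f : ℝ → ℝ → F) (hf : ContDiff ℝ (⊤:ℕ∞) (uncurry f)) (t u : ℝ) :
    HasDerivAt (fun t' => f t' u) (fderiv ℝ (uncurry f) (t, u) (1, 0)) t := by
  have hline : HasDerivAt (fun t' : ℝ => ((t', u) : ℝ × ℝ)) ((1:ℝ), (0:ℝ)) t :=
    HasDerivAt.prodMk (hasDerivAt_id _) (hasDerivAt_const _ _)
  exact ((hf.differentiable (by simp) (t, u)).hasFDerivAt).comp_hasDerivAt t hline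

theorem FCF_smooth_pu (f : ℝ → ℝ → F) (hf : ContDiff ℝ (⊤:ℕ∞) (uncurry f)) :
    ContDiff ℝ (⊤:ℕ∞) (fun p : ℝ × ℝ => fderiv ℝ (uncurry f) p (0, 1)) :=
  (hf.fderiv_right (by exact_mod_cast le_top)).clm_apply contDiff_const

/-- Mixed partials: a common value `M` for `∂ₜ∂ᵤf` and `∂ᵤ∂ₜf`. -/
theorem FCF_mixed_partials (f : ℝ → ℝ → F) (hf : ContDiff ℝ (⊤:ℕ∞) (uncurry f)) (t u : ℝ) :
    ∃ M : F, HasDerivAt (fun t' => deriv (fun u' => f t' u') u) M t ∧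
      HasDerivAt (fun u' => deriv (fun t' => f t' u') t) M u := by
  set D : ℝ × ℝ → (ℝ × ℝ) →L[ℝ] F := fderiv ℝ (uncurry f) with hD
  have hDsm : ContDiff ℝ (⊤:ℕ∞) D := hf.fderiv_right (by exact_mod_cast le_top)
  have hD' : HasFDerivAt D (fderiv ℝ D (t, u)) (t, u) :=
    (hDsm.differentiable (by simp) (t, u)).hasFDerivAt
  set D' := fderiv ℝ D (t, u) with hD'def
  have hsym : ∀ v w : ℝ × ℝ, D' v w = D' w v :=
    second_derivative_symmetric
      (fun y => (hf.differentiable (by simp) y).hasFDerivAt) hD'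
  refine ⟨D' (1, 0) (0, 1), ?_, ?_⟩
  · have h1 : ∀ t' u', deriv (fun u'' => f t' u'') u' = D (t', u') (0, 1) := fun t' u' =>
      (FCF_slice_u f hf t' u').deriv
    have e : HasFDerivAt (fun p => D p (0, 1))
        ((ContinuousLinearMap.apply ℝ F ((0:ℝ),(1:ℝ))).comp D') (t, u) :=
      (ContinuousLinearMap.apply ℝ F ((0:ℝ),(1:ℝ))).hasFDerivAt.comp (t, u) hD'
    have hline : HasDerivAt (fun t' : ℝ => ((t', u) : ℝ × ℝ)) ((1:ℝ), (0:ℝ)) t :=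
      HasDerivAt.prodMk (hasDerivAt_id _) (hasDerivAt_const _ _)
    have := e.comp_hasDerivAt t hline
    simp only [ContinuousLinearMap.comp_apply, ContinuousLinearMap.apply_apply] at this
    simpa only [← h1, Function.comp_def] using this
  · have h1 : ∀ t' u', deriv (fun t'' => f t'' u') t' = D (t', u') (1, 0) := fun t' u' =>
      (FCF_slice_t f hf t' u').deriv
    have e : HasFDerivAt (fun p => D p (1, 0))
        ((ContinuousLinearMap.apply ℝ F ((1:ℝ),(0:ℝ))).comp D') (t, u) :=
      (ContinuousLinearMap.apply ℝ F ((1:ℝ),(0:ℝ))).hasFDerivAt.comp (t, u) hD'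
    have hline : HasDerivAt (fun u' : ℝ => ((t, u') : ℝ × ℝ)) ((0:ℝ), (1:ℝ)) u :=
      HasDerivAt.prodMk (hasDerivAt_const _ _) (hasDerivAt_id _)
    have := e.comp_hasDerivAt u hline
    simp only [ContinuousLinearMap.comp_apply, ContinuousLinearMap.apply_apply] at this
    rw [hsym (1,0) (0,1)]
    simpa only [← h1, Function.comp_def] using this

section Smooth

variable (γ : ℝ → ℝ → E3) (hγ : ContDiff ℝ (⊤:ℕ∞) (uncurry γ)) (hg : ∀ t u, 0 < pg γ t u)
include hγ

theorem FCF_pu_smooth : ContDiff ℝ (⊤:ℕ∞) (uncurry (pu γ)) := by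
  have : uncurry (pu γ) = fun p : ℝ × ℝ => fderiv ℝ (uncurry γ) p (0, 1) := by
    funext p
    exact (FCF_slice_u γ hγ p.1 p.2).deriv
  rw [this]; exact FCF_smooth_pu γ hγ

include hg

theorem FCF_pg_smooth : ContDiff ℝ (⊤:ℕ∞) (uncurry (pg γ)) := by
  rw [contDiff_iff_contDiffAt]
  intro p
  have h0 : uncurry (pg γ) = fun p : ℝ × ℝ => ‖uncurry (pu γ) p‖ := rfl
  rw [h0]
  refine ((FCF_pu_smooth γ hγ).contDiffAt).norm ℝ ?_
  have h2 := hg p.1 p.2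
  rw [pg] at h2
  intro h
  rw [show uncurry (pu γ) p = pu γ p.1 p.2 from rfl] at h
  rw [h, norm_zero] at h2
  exact lt_irrefl _ h2

theorem FCF_tang_smooth : ContDiff ℝ (⊤:ℕ∞) (uncurry (tang γ)) := by
  have h0 : uncurry (tang γ) = fun p : ℝ × ℝ => (uncurry (pg γ) p)⁻¹ • uncurry (pu γ) p := rfl
  rw [h0]
  exact ((FCF_pg_smooth γ hγ hg).inv (fun p => (hg p.1 p.2).ne')).smul (FCF_pu_smooth γ hγ)

theorem FCF_W_smooth : ContDiff ℝ (⊤:ℕ∞) (uncurry (ds γ (tang γ))) := by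
  have h0 : uncurry (ds γ (tang γ)) = fun p : ℝ × ℝ =>
      (uncurry (pg γ) p)⁻¹ • uncurry (pu (tang γ)) p := rfl
  rw [h0]
  exact ((FCF_pg_smooth γ hγ hg).inv (fun p => (hg p.1 p.2).ne')).smul
    (FCF_pu_smooth (tang γ) (FCF_tang_smooth γ hγ hg))

/-- The unit tangent has norm one. -/
theorem FCF_tang_norm (t u : ℝ) : ‖tang γ t u‖ = 1 := by
  have h := hg t u
  rw [tang, ds, norm_smul, norm_inv, Real.norm_eq_abs, abs_of_pos h]
  rw [show ‖pu γ t u‖ = pg γ t u from rfl]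
  field_simp

end Smooth

end FCFAux


/-- **Key computation.** Under the flow, `∂ₜ g = -(g/L)·∫ κ² cos θ g`. -/
theorem FCF_key (Tend : ℝ) (γ : ℝ → ℝ → E3) (θ : ℝ → ℝ → ℝ)
    (υT : ℝ → ℝ → ℝ) (c : ℝ → ℝ)
    (hγ : ContDiff ℝ (⊤:ℕ∞) (Function.uncurry γ))
    (hθ : ContDiff ℝ (⊤:ℕ∞) (Function.uncurry θ))
    (hg : ∀ t u, 0 < pg γ t u)
    (hυT : ∀ t ∈ Set.Ico (0:ℝ) Tend, ∀ u, υT t u =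
      c t + (∫ v in (0:ℝ)..u, (curv γ t v) ^ 2 * Real.cos (θ t v) * pg γ t v)
        - ((∫ v in (0:ℝ)..u, pg γ t v) / len γ t)
            * ∫ v in (0:ℝ)..(2 * π), (curv γ t v) ^ 2 * Real.cos (θ t v) * pg γ t v)
    (hflow : ∀ t ∈ Set.Ico (0:ℝ) Tend, ∀ u,
      pt γ t u = fcfVel γ θ t u + υT t u • tang γ t u)
    (t : ℝ) (ht : t ∈ Set.Ico (0:ℝ) Tend) (u : ℝ) :
    HasDerivAt (fun t' => pg γ t' u)
      (-(pg γ t u) *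
        (∫ v in (0:ℝ)..(2 * π), (curv γ t v) ^ 2 * Real.cos (θ t v) * pg γ t v) / len γ t) t := by
  set I : ℝ := ∫ v in (0:ℝ)..(2 * π), (curv γ t v) ^ 2 * Real.cos (θ t v) * pg γ t v with hI
  set L : ℝ := len γ t with hLdef
  obtain ⟨M, hMt, hMu⟩ := FCF_mixed_partials γ hγ t u
  have hMt' : HasDerivAt (fun t' => pu γ t' u) M t := hMt
  have hMu' : HasDerivAt (fun u' => pt γ t u') M u := hMu
  -- tangent: unit, and slice derivatives
  have hTd : ∀ u', HasDerivAt (fun u'' => tang γ t u'') (pu (tang γ) t u') u' := fun u' =>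
    (FCF_slice_u (tang γ) (FCF_tang_smooth γ hγ hg) t u').differentiableAt.hasDerivAt
  have hTT : ∀ u', ⟪tang γ t u', tang γ t u'⟫ = 1 := by
    intro u'
    rw [real_inner_self_eq_norm_mul_norm, FCF_tang_norm γ hγ hg t u']
    norm_num
  have hdTT : ∀ u', ⟪pu (tang γ) t u', tang γ t u'⟫ = 0 := by
    intro u'
    have h1 : HasDerivAt (fun u'' => (⟪tang γ t u'', tang γ t u''⟫ : ℝ))
        (⟪tang γ t u', pu (tang γ) t u'⟫ + ⟪pu (tang γ) t u', tang γ t u'⟫) u' :=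
      (hTd u').inner ℝ (hTd u')
    have h2 : (fun u'' => (⟪tang γ t u'', tang γ t u''⟫ : ℝ)) = fun _ => (1:ℝ) :=
      funext fun v => hTT v
    rw [h2] at h1
    have h3 := h1.unique (hasDerivAt_const u' (1:ℝ))
    rw [real_inner_comm] at h3
    linarith
  have hpuT : ∀ u', pu (tang γ) t u' = pg γ t u' • ds γ (tang γ) t u' := by
    intro u'
    rw [ds, smul_inv_smul₀ (hg t u').ne']
  have hWT : ∀ u', ⟪ds γ (tang γ) t u', tang γ t u'⟫ = 0 := by
    intro u'
    rw [ds, real_inner_smul_left, hdTT u', mul_zero]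
  -- continuity in u at fixed t
  have hWc : Continuous (fun v => ds γ (tang γ) t v) := by
    have := (FCF_W_smooth γ hγ hg).continuous.comp
      ((continuous_const (y := t)).prodMk continuous_id)
    exact this
  have hgc : Continuous (fun v => pg γ t v) := by
    have := (FCF_pg_smooth γ hγ hg).continuous.comp
      ((continuous_const (y := t)).prodMk continuous_id)
    exact this
  have hθc : Continuous (fun v => θ t v) := by
    have := (hθ.continuous).comp ((continuous_const (y := t)).prodMk continuous_id)
    exact this
  have hhc : Continuous (fun v => (curv γ t v) ^ 2 * Real.cos (θ t v) * pg γ t v) := by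
    have hκ : Continuous (fun v => curv γ t v) := hWc.norm
    exact ((hκ.pow 2).mul (Real.continuous_cos.comp hθc)).mul hgc
  -- derivative of υT in u
  have hA : HasDerivAt (fun u' => ∫ v in (0:ℝ)..u', (curv γ t v) ^ 2 * Real.cos (θ t v) * pg γ t v)
      ((curv γ t u) ^ 2 * Real.cos (θ t u) * pg γ t u) u :=
    intervalIntegral.integral_hasDerivAt_right (hhc.intervalIntegrable _ _)
      (hhc.stronglyMeasurable.stronglyMeasurableAtFilter) hhc.continuousAt
  have hS : HasDerivAt (fun u' => ∫ v in (0:ℝ)..u', pg γ t v) (pg γ t u) u :=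
    intervalIntegral.integral_hasDerivAt_right (hgc.intervalIntegrable _ _)
      (hgc.stronglyMeasurable.stronglyMeasurableAtFilter) hgc.continuousAt
  have hυ : HasDerivAt (fun u' => υT t u')
      ((curv γ t u) ^ 2 * Real.cos (θ t u) * pg γ t u - pg γ t u / L * I) u := by
    have h0 : HasDerivAt (fun u' => c t
        + (∫ v in (0:ℝ)..u', (curv γ t v) ^ 2 * Real.cos (θ t v) * pg γ t v)
        - ((∫ v in (0:ℝ)..u', pg γ t v) / L) * I)
        (0 + (curv γ t u) ^ 2 * Real.cos (θ t u) * pg γ t u - pg γ t u / L * I) u :=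
      ((hasDerivAt_const u (c t)).add hA).sub ((hS.div_const L).mul_const I)
    have heq : (fun u' => υT t u') = fun u' => c t
        + (∫ v in (0:ℝ)..u', (curv γ t v) ^ 2 * Real.cos (θ t v) * pg γ t v)
        - ((∫ v in (0:ℝ)..u', pg γ t v) / L) * I := funext fun u' => hυT t ht u'
    rw [heq]
    simpa using h0
  -- the flow velocity as a function of u
  set Vfun : ℝ → E3 := fun u' => fcfVel γ θ t u' + υT t u' • tang γ t u' with hVdef
  have hMu'' : HasDerivAt Vfun M u := by
    have heq : (fun u' => pt γ t u') = Vfun := funext fun u' => hflow t ht u'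
    rwa [heq] at hMu'
  have hVT : ∀ u', ⟪Vfun u', tang γ t u'⟫ = υT t u' := by
    intro u'
    show ⟪fcfVel γ θ t u' + υT t u' • tang γ t u', tang γ t u'⟫ = υT t u'
    rw [inner_add_left, real_inner_smul_left, fcfVel, inner_add_left,
      real_inner_smul_left, real_inner_smul_left, hWT u',
      FCF_cross_inner_left (tang γ t u') (ds γ (tang γ) t u'), hTT u']
    ring
  have hψ : HasDerivAt (fun u' => (⟪Vfun u', tang γ t u'⟫ : ℝ))
      (⟪Vfun u, pu (tang γ) t u⟫ + ⟪M, tang γ t u⟫) u := hMu''.inner ℝ (hTd u)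
  have hψeq : (fun u' => (⟪Vfun u', tang γ t u'⟫ : ℝ)) = fun u' => υT t u' := funext hVT
  rw [hψeq] at hψ
  have huniq := hψ.unique hυ
  have hTW : ⟪tang γ t u, ds γ (tang γ) t u⟫ = 0 := by
    rw [real_inner_comm]; exact hWT u
  have hWW : ⟪ds γ (tang γ) t u, ds γ (tang γ) t u⟫ = (curv γ t u) ^ 2 := by
    rw [real_inner_self_eq_norm_mul_norm,
      show ‖ds γ (tang γ) t u‖ = curv γ t u from rfl]
    ring
  have hVW : ⟪Vfun u, ds γ (tang γ) t u⟫ = Real.cos (θ t u) * (curv γ t u) ^ 2 := by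
    show ⟪fcfVel γ θ t u + υT t u • tang γ t u, ds γ (tang γ) t u⟫ = _
    rw [inner_add_left, real_inner_smul_left, fcfVel, inner_add_left,
      real_inner_smul_left, real_inner_smul_left,
      FCF_cross_inner_right (tang γ t u) (ds γ (tang γ) t u), hTW, hWW]
    ring
  have hVpuT : ⟪Vfun u, pu (tang γ) t u⟫
      = pg γ t u * (Real.cos (θ t u) * (curv γ t u) ^ 2) := by
    rw [hpuT u, real_inner_smul_right, hVW]
  have hMT : ⟪M, tang γ t u⟫ = -(pg γ t u) * I / L := by
    rw [hVpuT] at huniq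
    linear_combination huniq
  -- time derivative of g
  have hφ : HasDerivAt (fun t' => (⟪pu γ t' u, pu γ t' u⟫ : ℝ))
      (⟪pu γ t u, M⟫ + ⟪M, pu γ t u⟫) t := hMt'.inner ℝ hMt'
  have hφt : (⟪pu γ t u, pu γ t u⟫ : ℝ) ≠ 0 := by
    rw [real_inner_self_eq_norm_mul_norm]
    have := hg t u
    rw [pg] at this
    positivity
  have hsq := (Real.hasDerivAt_sqrt hφt).comp t hφ
  simp only [Function.comp_def] at hsq
  have heqn : (fun t' => Real.sqrt (⟪pu γ t' u, pu γ t' u⟫ : ℝ)) = fun t' => pg γ t' u := by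
    funext s
    rw [real_inner_self_eq_norm_mul_norm, Real.sqrt_mul_self (norm_nonneg _)]
    rfl
  rw [heqn] at hsq
  refine hsq.congr_deriv (Eq.symm ?_)
  have hFT : pu γ t u = pg γ t u • tang γ t u := by
    rw [tang, ds, smul_inv_smul₀ (hg t u).ne']
  have h1 : (⟪pu γ t u, M⟫ : ℝ) = pg γ t u * ⟪M, tang γ t u⟫ := by
    rw [real_inner_comm, hFT, real_inner_smul_right]
  have h2 : (⟪M, pu γ t u⟫ : ℝ) = pg γ t u * ⟪M, tang γ t u⟫ := by
    rw [hFT, real_inner_smul_right]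
  have h3 : (⟪pu γ t u, pu γ t u⟫ : ℝ) = pg γ t u * pg γ t u := by
    rw [real_inner_self_eq_norm_mul_norm]; rfl
  have h2g : (2 * pg γ t u) ≠ 0 := by have := hg t u; positivity
  rw [h1, h2, h3, hMT, Real.sqrt_mul_self (hg t u).le,
    show pg γ t u * (-pg γ t u * I / L) + pg γ t u * (-pg γ t u * I / L)
      = (2 * pg γ t u) * (-pg γ t u * I / L) from by ring,
    one_div, inv_mul_cancel_left₀ h2g]

/-- Under the framed curvature flow with the tangential velocity
`υ_T(t,u) = c(t) + ∫₀ᵘ κ² cos θ g dū − (s(t,u)/L(Γ_t)) ∫₀^{2π} κ² cos θ g dū`,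
the quantity `g(t,u)/L(Γ_t)` is constant in time. -/
theorem framed_curvature_flow_tangential_redistribution
    (Tend : ℝ) (hTend : 0 < Tend) (γ : ℝ → ℝ → E3) (θ : ℝ → ℝ → ℝ)
    (υT : ℝ → ℝ → ℝ) (c : ℝ → ℝ) (hc : Differentiable ℝ c)
    (hγ : ContDiff ℝ (⊤ : ℕ∞) (Function.uncurry γ))
    (hθ : ContDiff ℝ (⊤ : ℕ∞) (Function.uncurry θ))
    (hγper : ∀ t u, γ t (u + 2 * π) = γ t u)
    (hθper : ∀ t u, θ t (u + 2 * π) = θ t u)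
    (hg : ∀ t u, 0 < pg γ t u)
    (hυT : ∀ t ∈ Set.Ico (0:ℝ) Tend, ∀ u, υT t u =
      c t + (∫ v in (0:ℝ)..u, (curv γ t v) ^ 2 * Real.cos (θ t v) * pg γ t v)
        - ((∫ v in (0:ℝ)..u, pg γ t v) / len γ t)
            * ∫ v in (0:ℝ)..(2 * π), (curv γ t v) ^ 2 * Real.cos (θ t v) * pg γ t v)
    (hflow : ∀ t ∈ Set.Ico (0:ℝ) Tend, ∀ u,
      pt γ t u = fcfVel γ θ t u + υT t u • tang γ t u) :
    ∀ t ∈ Set.Ico (0:ℝ) Tend, ∀ u,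
      deriv (fun t' => pg γ t' u / len γ t') t = 0 := by
  intro t ht u
  have hγ' : ContDiff ℝ (⊤:ℕ∞) (Function.uncurry γ) := hγ.of_le (by simp)
  have hθ' : ContDiff ℝ (⊤:ℕ∞) (Function.uncurry θ) := hθ.of_le (by simp)
  set I : ℝ := ∫ v in (0:ℝ)..(2 * π), (curv γ t v) ^ 2 * Real.cos (θ t v) * pg γ t v with hIdef
  set L : ℝ := len γ t with hLdef
  -- continuity of g in u
  have hgc : ∀ s, Continuous (fun v => pg γ s v) := by
    intro s
    have := (FCF_pg_smooth γ hγ' hg).continuous.comp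
      ((continuous_const (y := s)).prodMk continuous_id)
    exact this
  -- positivity of the length
  have hL : 0 < L := by
    rw [hLdef, len]
    exact intervalIntegral.intervalIntegral_pos_of_pos
      ((hgc t).intervalIntegrable _ _) (hg t) (by positivity)
  -- the `t`-partial derivative of `g` as a continuous function
  set G : ℝ × ℝ → ℝ := fun p => fderiv ℝ (Function.uncurry (pg γ)) p (1, 0) with hGdef
  have hGc : Continuous G :=
    (((FCF_pg_smooth γ hγ' hg).fderiv_right (m := (⊤:ℕ∞))
      (by exact_mod_cast le_top)).clm_apply contDiff_const).continuous
  have hGd : ∀ t' u', HasDerivAt (fun s => pg γ s u') (G (t', u')) t' := fun t' u' =>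
    FCF_slice_t (pg γ) (FCF_pg_smooth γ hγ' hg) t' u'
  -- derivative of the length via differentiation under the integral sign
  obtain ⟨C, hC⟩ := ((isCompact_closedBall t 1).prod (isCompact_uIcc
      (a := (0:ℝ)) (b := 2 * π))).exists_bound_of_continuousOn hGc.continuousOn
  have hlen : HasDerivAt (len γ) (∫ u' in (0:ℝ)..(2 * π), G (t, u')) t := by
    have hmain := intervalIntegral.hasDerivAt_integral_of_dominated_loc_of_deriv_le
      (F := fun s u' => pg γ s u') (F' := fun s u' => G (s, u')) (bound := fun _ => C)
      (μ := volume) (a := 0) (b := 2 * π) (x₀ := t) (s := Metric.ball t 1) (Metric.ball_mem_nhds t one_pos)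
      (Filter.Eventually.of_forall fun s => ((hgc s).aestronglyMeasurable))
      ((hgc t).intervalIntegrable _ _)
      ((hGc.comp ((continuous_const (y := t)).prodMk continuous_id)).aestronglyMeasurable)
      ?_ intervalIntegrable_const ?_
    · exact hmain.2
    · refine Filter.Eventually.of_forall fun u' hu' s hs => ?_
      exact hC (s, u') ⟨Metric.ball_subset_closedBall hs, Set.uIoc_subset_uIcc hu'⟩
    · exact Filter.Eventually.of_forall fun u' _ s _ => hGd s u'
  -- identify the integrand at time `t`
  have hGt : ∀ u', G (t, u') = -(I / L) * pg γ t u' := by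
    intro u'
    have h1 := (hGd t u').unique
      (FCF_key Tend γ θ υT c hγ' hθ' hg hυT hflow t ht u')
    rw [h1]
    ring
  have hint : (∫ u' in (0:ℝ)..(2 * π), G (t, u')) = -I := by
    rw [intervalIntegral.integral_congr (g := fun u' => -(I / L) * pg γ t u')
      (fun x _ => hGt x)]
    rw [intervalIntegral.integral_const_mul]
    rw [show (∫ u' in (0:ℝ)..(2 * π), pg γ t u') = L from rfl]
    field_simp
  rw [hint] at hlen
  -- conclude by the quotient rule
  have hkey := FCF_key Tend γ θ υT c hγ' hθ' hg hυT hflow t ht u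
  have hdiv : HasDerivAt (fun t' => pg γ t' u / len γ t') _ t := hkey.div hlen hL.ne'
  rw [hdiv.deriv, ← hLdef]
  field_simp [hL.ne']
  rw [hIdef]
  ring
end
end

section
/- Fix ρ₀ > 0 and φ ∈ (0, π/2), set t̄ := ρ₀²/(2 cos φ), and define for t ∈ [0, t̄) the family γ(t,u) := (ρ(t) cos u, ρ(t) sin u, z(t)) with ρ(t) := (ρ₀² − 2t cos φ)^{1/2} and z(t) := (ρ₀ − ρ(t)) tan φ. Then γ solves the framed curvature flow with constant angle θ ≡ φ on [0,t̄), ρ(t) → 0 as t → t̄, and γ(t,u) converges uniformly to the single point (0, 0, ρ₀ tan φ) as t → t̄; i.e. the flow develops a cone singularity at a point shifted from the center of the initial circle in the binormal direction by the distance ρ₀ tan φ. -/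
noncomputable section

open Real MeasureTheory
open scoped RealInnerProductSpace

/-!
On a horizontal circle of radius `r` the curvature vector `∂ₛ²γ = -r⁻¹ (cos u, sin u, 0)` points
to the axis and `∂ₛγ × ∂ₛ²γ = r⁻¹ e₃`, so a family of horizontal circles moves by the framed
curvature flow with constant angle `φ` as soon as its radius and height solve `ρ' = -cos φ / ρ`,
`z' = sin φ / ρ`. The given `ρ` and `z` solve this up to `t̄`, where `ρ` vanishes; since every
point of the circle lies within `√(ρ² + (z - ρ₀ tan φ)²)` of `(0, 0, ρ₀ tan φ)`, the circles
collapse uniformly onto that point.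
-/

open Filter Topology WithLp

theorem hasDerivAt_toLp_vec3 {f₀ f₁ f₂ : ℝ → ℝ} {v₀ v₁ v₂ x : ℝ}
    (h₀ : HasDerivAt f₀ v₀ x) (h₁ : HasDerivAt f₁ v₁ x) (h₂ : HasDerivAt f₂ v₂ x) :
    HasDerivAt (fun y => (toLp 2 ![f₀ y, f₁ y, f₂ y] : E3)) (toLp 2 ![v₀, v₁, v₂]) x := by
  have h : HasDerivAt (fun y => ![f₀ y, f₁ y, f₂ y]) ![v₀, v₁, v₂] x := by
    refine hasDerivAt_pi.mpr fun i => ?_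
    fin_cases i
    exacts [h₀, h₁, h₂]
  exact (PiLp.hasFDerivAt_toLp 2 _).comp_hasDerivAt x h

section HorizontalCircle

variable {γ : ℝ → ℝ → E3} {t r c : ℝ}

theorem pu_of_horizontal_circle (hγ : ∀ u, (γ t u).ofLp = ![r * cos u, r * sin u, c]) (u : ℝ) :
    pu γ t u = toLp 2 ![-(r * sin u), r * cos u, 0] := by
  have hγ' : (fun u => γ t u) = fun u => toLp 2 ![r * cos u, r * sin u, c] :=
    funext fun u => by rw [← hγ u]
  rw [pu, hγ']
  exact (hasDerivAt_toLp_vec3 (((hasDerivAt_cos u).const_mul r).congr_deriv (mul_neg _ _))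
    ((hasDerivAt_sin u).const_mul r) (hasDerivAt_const u c)).deriv

theorem pg_of_horizontal_circle (hγ : ∀ u, (γ t u).ofLp = ![r * cos u, r * sin u, c])
    (hr : 0 ≤ r) (u : ℝ) : pg γ t u = r := by
  rw [pg, pu_of_horizontal_circle hγ, EuclideanSpace.norm_eq]
  conv_rhs => rw [← sqrt_sq hr]
  congr 1
  simp only [Fin.sum_univ_three, Matrix.cons_val_zero, Matrix.cons_val_one, Matrix.cons_val,
    norm_eq_abs, sq_abs]
  linear_combination r ^ 2 * sin_sq_add_cos_sq u

theorem tang_of_horizontal_circle (hγ : ∀ u, (γ t u).ofLp = ![r * cos u, r * sin u, c])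
    (hr : 0 < r) (u : ℝ) : tang γ t u = toLp 2 ![-sin u, cos u, 0] := by
  rw [tang, ds, pg_of_horizontal_circle hγ hr.le, pu_of_horizontal_circle hγ]
  ext i
  fin_cases i <;> simp [hr.ne']

theorem ds_tang_of_horizontal_circle (hγ : ∀ u, (γ t u).ofLp = ![r * cos u, r * sin u, c])
    (hr : 0 < r) (u : ℝ) : ds γ (tang γ) t u = toLp 2 ![-cos u / r, -sin u / r, 0] := by
  have htang : (fun u => tang γ t u) = fun u => toLp 2 ![-sin u, cos u, 0] :=
    funext (tang_of_horizontal_circle hγ hr)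
  have hderiv : pu (tang γ) t u = toLp 2 ![-cos u, -sin u, 0] := by
    rw [pu, htang]
    exact (hasDerivAt_toLp_vec3 (hasDerivAt_sin u).neg (hasDerivAt_cos u)
      (hasDerivAt_const u 0)).deriv
  rw [ds, pg_of_horizontal_circle hγ hr.le, hderiv]
  ext i
  fin_cases i <;> simp [div_eq_inv_mul]

theorem fcfVel_of_horizontal_circle (hγ : ∀ u, (γ t u).ofLp = ![r * cos u, r * sin u, c])
    (hr : 0 < r) (θ : ℝ → ℝ → ℝ) (u : ℝ) :
    fcfVel γ θ t u = toLp 2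
      ![-cos (θ t u) / r * cos u, -cos (θ t u) / r * sin u, sin (θ t u) / r] := by
  rw [fcfVel, ds_tang_of_horizontal_circle hγ hr, tang_of_horizontal_circle hγ hr, cross]
  ext i
  fin_cases i <;> simp <;> field_simp
  linear_combination sin (θ t u) * sin_sq_add_cos_sq u

end HorizontalCircle

section CircleFamily

variable {γ : ℝ → ℝ → E3} {ρ z : ℝ → ℝ}

theorem pt_of_horizontal_circles (hγ : ∀ t u, (γ t u).ofLp = ![ρ t * cos u, ρ t * sin u, z t])
    {t ρ' z' : ℝ} (hρ : HasDerivAt ρ ρ' t) (hz : HasDerivAt z z' t) (u : ℝ) :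
    pt γ t u = toLp 2 ![ρ' * cos u, ρ' * sin u, z'] := by
  have hγ' : (fun t => γ t u) = fun t => toLp 2 ![ρ t * cos u, ρ t * sin u, z t] :=
    funext fun t => by rw [← hγ t u]
  rw [pt, hγ']
  exact (hasDerivAt_toLp_vec3 (hρ.mul_const _) (hρ.mul_const _) hz).deriv

theorem pt_eq_fcfVel_of_horizontal_circles
    (hγ : ∀ t u, (γ t u).ofLp = ![ρ t * cos u, ρ t * sin u, z t]) {θ t : ℝ} (hρpos : 0 < ρ t)
    (hρ : HasDerivAt ρ (-cos θ / ρ t) t) (hz : HasDerivAt z (sin θ / ρ t) t) (u : ℝ) :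
    pt γ t u = fcfVel γ (fun _ _ => θ) t u := by
  rw [pt_of_horizontal_circles hγ hρ hz, fcfVel_of_horizontal_circle (hγ t) hρpos]

theorem dist_horizontal_circle (hγ : ∀ t u, (γ t u).ofLp = ![ρ t * cos u, ρ t * sin u, z t])
    (h t u : ℝ) : dist (toLp 2 ![0, 0, h] : E3) (γ t u) = √(ρ t ^ 2 + (z t - h) ^ 2) := by
  rw [EuclideanSpace.dist_eq]
  congr 1
  simp only [Fin.sum_univ_three, hγ, Matrix.cons_val_zero, Matrix.cons_val_one, Matrix.cons_val,
    Real.dist_eq, sq_abs]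
  linear_combination ρ t ^ 2 * sin_sq_add_cos_sq u

theorem tendstoUniformly_horizontal_circles
    (hγ : ∀ t u, (γ t u).ofLp = ![ρ t * cos u, ρ t * sin u, z t]) {l : Filter ℝ} {h : ℝ}
    (hρ : Tendsto ρ l (𝓝 0)) (hz : Tendsto z l (𝓝 h)) :
    TendstoUniformly γ (fun _ => (toLp 2 ![0, 0, h] : E3)) l := by
  have hdist : Tendsto (fun t => √(ρ t ^ 2 + (z t - h) ^ 2)) l (𝓝 0) := by
    simpa using ((hρ.pow 2).add ((hz.sub_const h).pow 2)).sqrt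
  rw [Metric.tendstoUniformly_iff]
  intro ε hε
  filter_upwards [hdist.eventually (gt_mem_nhds hε)] with t ht u
  rwa [dist_horizontal_circle hγ]

end CircleFamily

theorem hasDerivAt_sqrt_sub_two_mul_mul {a c t : ℝ} (h : 0 < a - 2 * t * c) :
    HasDerivAt (fun t => √(a - 2 * t * c)) (-c / √(a - 2 * t * c)) t := by
  have hlin : HasDerivAt (fun t => a - 2 * t * c) (-(2 * c)) t := by
    simpa using ((hasDerivAt_id t).const_mul 2).mul_const c |>.const_sub a
  convert hlin.sqrt h.ne' using 1
  field_simp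

theorem framed_curvature_flow_cone_singularity_general
    (ρ₀ φ : ℝ) (hφ : φ ∈ Set.Ioo (0:ℝ) (π / 2))
    (tend : ℝ) (htend : tend = ρ₀ ^ 2 / (2 * Real.cos φ))
    (ρ z : ℝ → ℝ)
    (hρ : ∀ t, ρ t = Real.sqrt (ρ₀ ^ 2 - 2 * t * Real.cos φ))
    (hz : ∀ t, z t = (ρ₀ - ρ t) * Real.tan φ)
    (γ : ℝ → ℝ → E3)
    (hγ : ∀ t u, γ t u = ![ρ t * Real.cos u, ρ t * Real.sin u, z t]) :
    (∀ t ∈ Set.Ico (0:ℝ) tend, ∀ u,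
        pt γ t u = fcfVel γ (fun _ _ => φ) t u) ∧
    Filter.Tendsto ρ (nhdsWithin tend (Set.Iio tend)) (nhds 0) ∧
    TendstoUniformly γ (fun _ => (WithLp.toLp 2 ![0, 0, ρ₀ * Real.tan φ] : E3))
      (nhdsWithin tend (Set.Iio tend)) := by
  have hcos : 0 < cos φ := cos_pos_of_mem_Ioo ⟨by linarith [pi_pos, hφ.1], hφ.2⟩
  have hρ_fun : ρ = fun t => √(ρ₀ ^ 2 - 2 * t * cos φ) := funext hρ
  have hρ_tend : Tendsto ρ (𝓝[<] tend) (𝓝 0) := by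
    have hρ_zero : ρ tend = 0 := by
      rw [hρ, htend, sqrt_eq_zero', sub_nonpos]
      field_simp
      exact le_rfl
    exact hρ_zero ▸ (by rw [hρ_fun]; fun_prop : Continuous ρ).continuousWithinAt.tendsto
  refine ⟨fun t ht u => ?_, hρ_tend, ?_⟩
  · have hpos : 0 < ρ₀ ^ 2 - 2 * t * cos φ := by
      have := (lt_div_iff₀ (by positivity)).mp (htend ▸ ht.2)
      linarith
    have hρ' : HasDerivAt ρ (-cos φ / ρ t) t := hρ_fun ▸ hasDerivAt_sqrt_sub_two_mul_mul hpos
    have hz' : HasDerivAt z (sin φ / ρ t) t := by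
      rw [funext hz]
      refine ((hρ'.const_sub ρ₀).mul_const (tan φ)).congr_deriv ?_
      rw [tan_eq_sin_div_cos]
      field_simp
    exact pt_eq_fcfVel_of_horizontal_circles hγ (hρ t ▸ sqrt_pos.mpr hpos) hρ' hz' u
  · have hz_tend : Tendsto z (𝓝[<] tend) (𝓝 (ρ₀ * tan φ)) := by
      simpa [funext hz] using (hρ_tend.const_sub ρ₀).mul_const (tan φ)
    exact tendstoUniformly_horizontal_circles hγ hρ_tend hz_tend

/-- Cone singularity: the shrinking circle
`γ(t,u) = (ρ(t) cos u, ρ(t) sin u, z(t))` with `ρ(t) = (ρ₀² − 2t cos φ)^{1/2}`,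
`z(t) = (ρ₀ − ρ(t)) tan φ` solves the framed curvature flow with constant angle
`θ ≡ φ` on `[0, t̄)`, `t̄ = ρ₀²/(2 cos φ)`, the radius tends to `0`, and the curve
converges uniformly to the single point `(0, 0, ρ₀ tan φ)` as `t → t̄`. -/
theorem framed_curvature_flow_cone_singularity
    (ρ₀ φ : ℝ) (hρ₀ : 0 < ρ₀) (hφ : φ ∈ Set.Ioo (0:ℝ) (π / 2))
    (tend : ℝ) (htend : tend = ρ₀ ^ 2 / (2 * Real.cos φ))
    (ρ z : ℝ → ℝ)
    (hρ : ∀ t, ρ t = Real.sqrt (ρ₀ ^ 2 - 2 * t * Real.cos φ))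
    (hz : ∀ t, z t = (ρ₀ - ρ t) * Real.tan φ)
    (γ : ℝ → ℝ → E3)
    (hγ : ∀ t u, γ t u = ![ρ t * Real.cos u, ρ t * Real.sin u, z t]) :
    (∀ t ∈ Set.Ico (0:ℝ) tend, ∀ u,
        pt γ t u = fcfVel γ (fun _ _ => φ) t u) ∧
    Filter.Tendsto ρ (nhdsWithin tend (Set.Iio tend)) (nhds 0) ∧
    TendstoUniformly γ (fun _ => (WithLp.toLp 2 ![0, 0, ρ₀ * Real.tan φ] : E3))
      (nhdsWithin tend (Set.Iio tend)) :=
  framed_curvature_flow_cone_singularity_general ρ₀ φ hφ tend htend ρ z hρ hz γ hγ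
end
end

section
/- Under the framed curvature flow, the length of the evolving curve satisfies d/dt L(Γ_t) = − ∫₀^{2π} κ(t,u)² cos θ(t,u) · g(t,u) du for all t ∈ [0,T̄). -/
noncomputable section

open Real MeasureTheory
open scoped RealInnerProductSpace

/-! ### Auxiliary lemmas -/

namespace FCFAux

lemma cross0 (a b : E3) : (cross a b) 0 = a 1 * b 2 - a 2 * b 1 := rfl
lemma cross1 (a b : E3) : (cross a b) 1 = a 2 * b 0 - a 0 * b 2 := rfl
lemma cross2 (a b : E3) : (cross a b) 2 = a 0 * b 1 - a 1 * b 0 := rfl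

lemma inner_E3 (x y : E3) : ⟪x,y⟫ = x 0 * y 0 + x 1 * y 1 + x 2 * y 2 := by
  simp [PiLp.inner_apply, Fin.sum_univ_three, RCLike.inner_apply, conj_trivial]; ring

lemma inner_cross_left (a b : E3) : ⟪cross a b, a⟫ = 0 := by
  simp only [inner_E3, cross0, cross1, cross2]; ring

lemma inner_cross_right (a b : E3) : ⟪cross a b, b⟫ = 0 := by
  simp only [inner_E3, cross0, cross1, cross2]; ring

lemma contDiff_cross : ContDiff ℝ (⊤ : ℕ∞) (fun p : E3 × E3 => cross p.1 p.2) := by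
  have ha : ∀ j : Fin 3, ContDiff ℝ (⊤ : ℕ∞) (fun p : E3 × E3 => p.1 j) := fun j => by
    exact (EuclideanSpace.proj (𝕜 := ℝ) j).contDiff.comp
      (contDiff_fst (E := E3) (F := E3) (𝕜 := ℝ))
  have hb : ∀ j : Fin 3, ContDiff ℝ (⊤ : ℕ∞) (fun p : E3 × E3 => p.2 j) := fun j => by
    exact (EuclideanSpace.proj (𝕜 := ℝ) j).contDiff.comp
      (contDiff_snd (E := E3) (F := E3) (𝕜 := ℝ))
  have h : ∀ i : Fin 3, ContDiff ℝ (⊤ : ℕ∞) (fun p : E3 × E3 => cross p.1 p.2 i) := by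
    intro i
    fin_cases i
    · exact ((ha 1).mul (hb 2)).sub ((ha 2).mul (hb 1))
    · exact ((ha 2).mul (hb 0)).sub ((ha 0).mul (hb 2))
    · exact ((ha 0).mul (hb 1)).sub ((ha 1).mul (hb 0))
  exact ((PiLp.continuousLinearEquiv 2 ℝ (fun _ : Fin 3 => ℝ)).symm.contDiff.comp
    (contDiff_pi.2 h) : _)

section PartialHelpers

variable {E : Type*} [NormedAddCommGroup E] [NormedSpace ℝ E]

/-- Partial derivative in the first variable as a `HasDerivAt`. -/
lemma hasDerivAt_partial_fst {F : ℝ × ℝ → E} {t u : ℝ}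
    (hF : DifferentiableAt ℝ F (t, u)) :
    HasDerivAt (fun t' => F (t', u)) (fderiv ℝ F (t, u) (1, 0)) t :=
  hF.hasFDerivAt.comp_hasDerivAt t ((hasDerivAt_id t).prodMk (hasDerivAt_const t u))

/-- Partial derivative in the second variable as a `HasDerivAt`. -/
lemma hasDerivAt_partial_snd {F : ℝ × ℝ → E} {t u : ℝ}
    (hF : DifferentiableAt ℝ F (t, u)) :
    HasDerivAt (fun u' => F (t, u')) (fderiv ℝ F (t, u) (0, 1)) u :=
  hF.hasFDerivAt.comp_hasDerivAt u ((hasDerivAt_const u t).prodMk (hasDerivAt_id u))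

end PartialHelpers

/-- Derivative of the norm of a nonvanishing curve. -/
lemma hasDerivAt_norm_comp {c : ℝ → E3} {c' : E3} {x : ℝ}
    (h : HasDerivAt c c' x) (hc : c x ≠ 0) :
    HasDerivAt (fun y => ‖c y‖) (⟪c', c x⟫ / ‖c x‖) x := by
  have h1 : HasDerivAt (fun y => ⟪c y, c y⟫) (⟪c x, c'⟫ + ⟪c', c x⟫) x := h.inner ℝ h
  have hne : ⟪c x, c x⟫ ≠ (0:ℝ) := by
    rw [real_inner_self_eq_norm_sq]
    exact pow_ne_zero 2 (norm_ne_zero_iff.2 hc)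
  have h2 := h1.sqrt hne
  have hfun : (fun y => Real.sqrt ⟪c y, c y⟫) = fun y => ‖c y‖ := by
    funext y; rw [real_inner_self_eq_norm_sq]
    exact Real.sqrt_sq (norm_nonneg _)
  rw [hfun] at h2
  convert h2 using 1
  rw [real_inner_comm (c x) c', real_inner_self_eq_norm_sq]
  rw [Real.sqrt_sq (norm_nonneg _)]
  have hn : ‖c x‖ ≠ 0 := norm_ne_zero_iff.2 hc
  field_simp
  ring

end FCFAux
namespace FCFAux

/-! ### The smooth fields as functions of `(t, u) : ℝ × ℝ` -/

def Pf (γ : ℝ → ℝ → E3) : ℝ × ℝ → E3 :=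
  fun p => fderiv ℝ (Function.uncurry γ) p ((0:ℝ), (1:ℝ))

def Gf (γ : ℝ → ℝ → E3) : ℝ × ℝ → ℝ := fun p => ‖Pf γ p‖

def Tf (γ : ℝ → ℝ → E3) : ℝ × ℝ → E3 := fun p => (Gf γ p)⁻¹ • Pf γ p

def TuF (γ : ℝ → ℝ → E3) : ℝ × ℝ → E3 := fun p => fderiv ℝ (Tf γ) p ((0:ℝ), (1:ℝ))

def Kf (γ : ℝ → ℝ → E3) : ℝ × ℝ → E3 := fun p => (Gf γ p)⁻¹ • TuF γ p

def Vf (γ : ℝ → ℝ → E3) (θ : ℝ → ℝ → ℝ) : ℝ × ℝ → E3 := fun p =>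
  Real.cos (θ p.1 p.2) • Kf γ p + Real.sin (θ p.1 p.2) • cross (Tf γ p) (Kf γ p)

def Hf (γ : ℝ → ℝ → E3) : ℝ × ℝ → ℝ := fun p => fderiv ℝ (Gf γ) p ((1:ℝ), (0:ℝ))

variable {γ : ℝ → ℝ → E3} {θ : ℝ → ℝ → ℝ}

lemma hasDerivAt_gamma_u (hγ : ContDiff ℝ (⊤ : ℕ∞) (Function.uncurry γ)) (t u : ℝ) :
    HasDerivAt (fun u' => γ t u') (Pf γ (t, u)) u :=
  hasDerivAt_partial_snd (hγ.differentiable (by simp) (t, u))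

lemma hasDerivAt_gamma_t (hγ : ContDiff ℝ (⊤ : ℕ∞) (Function.uncurry γ)) (t u : ℝ) :
    HasDerivAt (fun t' => γ t' u) (fderiv ℝ (Function.uncurry γ) (t, u) ((1:ℝ), (0:ℝ))) t :=
  hasDerivAt_partial_fst (hγ.differentiable (by simp) (t, u))

lemma pu_eq (hγ : ContDiff ℝ (⊤ : ℕ∞) (Function.uncurry γ)) (t u : ℝ) :
    pu γ t u = Pf γ (t, u) := (hasDerivAt_gamma_u hγ t u).deriv

lemma pt_eq (hγ : ContDiff ℝ (⊤ : ℕ∞) (Function.uncurry γ)) (t u : ℝ) :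
    pt γ t u = fderiv ℝ (Function.uncurry γ) (t, u) ((1:ℝ), (0:ℝ)) :=
  (hasDerivAt_gamma_t hγ t u).deriv

lemma hP (hγ : ContDiff ℝ (⊤ : ℕ∞) (Function.uncurry γ)) : ContDiff ℝ (⊤ : ℕ∞) (Pf γ) :=
  (hγ.fderiv_right (by simp)).clm_apply contDiff_const

lemma pg_eq (hγ : ContDiff ℝ (⊤ : ℕ∞) (Function.uncurry γ)) (t u : ℝ) :
    pg γ t u = Gf γ (t, u) := by
  simp only [pg, Gf, pu_eq hγ]

lemma Gf_pos (hγ : ContDiff ℝ (⊤ : ℕ∞) (Function.uncurry γ)) (hg : ∀ t u, 0 < pg γ t u)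
    (p : ℝ × ℝ) : 0 < Gf γ p := by
  have := hg p.1 p.2
  rwa [pg_eq hγ] at this

lemma Pf_ne (hγ : ContDiff ℝ (⊤ : ℕ∞) (Function.uncurry γ)) (hg : ∀ t u, 0 < pg γ t u)
    (p : ℝ × ℝ) : Pf γ p ≠ 0 := by
  have := Gf_pos hγ hg p
  rw [Gf] at this
  exact norm_pos_iff.1 this

lemma hGc (hγ : ContDiff ℝ (⊤ : ℕ∞) (Function.uncurry γ)) (hg : ∀ t u, 0 < pg γ t u) :
    ContDiff ℝ (⊤ : ℕ∞) (Gf γ) := by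
  rw [contDiff_iff_contDiffAt]
  intro p
  exact (contDiffAt_norm ℝ (Pf_ne hγ hg p)).comp p (hP hγ).contDiffAt

lemma tang_eq (hγ : ContDiff ℝ (⊤ : ℕ∞) (Function.uncurry γ)) (t u : ℝ) :
    tang γ t u = Tf γ (t, u) := by
  simp only [tang, ds, Tf, Gf, pg, pu_eq hγ]

lemma hT (hγ : ContDiff ℝ (⊤ : ℕ∞) (Function.uncurry γ)) (hg : ∀ t u, 0 < pg γ t u) :
    ContDiff ℝ (⊤ : ℕ∞) (Tf γ) :=
  ((hGc hγ hg).inv fun p => (Gf_pos hγ hg p).ne').smul (hP hγ)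

lemma hasDerivAt_Tf_u (hγ : ContDiff ℝ (⊤ : ℕ∞) (Function.uncurry γ)) (hg : ∀ t u, 0 < pg γ t u)
    (t u : ℝ) : HasDerivAt (fun u' => Tf γ (t, u')) (TuF γ (t, u)) u :=
  hasDerivAt_partial_snd ((hT hγ hg).differentiable (by simp) (t, u))

lemma pu_tang_eq (hγ : ContDiff ℝ (⊤ : ℕ∞) (Function.uncurry γ)) (hg : ∀ t u, 0 < pg γ t u)
    (t u : ℝ) : pu (tang γ) t u = TuF γ (t, u) := by
  have h := hasDerivAt_Tf_u hγ hg t u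
  rw [show (fun u' => Tf γ (t, u')) = fun u' => tang γ t u' from
    funext fun u' => (tang_eq hγ t u').symm] at h
  exact h.deriv

lemma ds_tang_eq (hγ : ContDiff ℝ (⊤ : ℕ∞) (Function.uncurry γ)) (hg : ∀ t u, 0 < pg γ t u)
    (t u : ℝ) : ds γ (tang γ) t u = Kf γ (t, u) := by
  simp only [ds, Kf, Gf, pg, pu_eq hγ, pu_tang_eq hγ hg]

lemma curv_eq (hγ : ContDiff ℝ (⊤ : ℕ∞) (Function.uncurry γ)) (hg : ∀ t u, 0 < pg γ t u)
    (t u : ℝ) : curv γ t u = ‖Kf γ (t, u)‖ := by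
  rw [curv, ds_tang_eq hγ hg]

lemma hTuF (hγ : ContDiff ℝ (⊤ : ℕ∞) (Function.uncurry γ)) (hg : ∀ t u, 0 < pg γ t u) :
    ContDiff ℝ (⊤ : ℕ∞) (TuF γ) :=
  ((hT hγ hg).fderiv_right (by simp)).clm_apply contDiff_const

lemma hK (hγ : ContDiff ℝ (⊤ : ℕ∞) (Function.uncurry γ)) (hg : ∀ t u, 0 < pg γ t u) :
    ContDiff ℝ (⊤ : ℕ∞) (Kf γ) :=
  ((hGc hγ hg).inv fun p => (Gf_pos hγ hg p).ne').smul (hTuF hγ hg)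

lemma fcfVel_eq (hγ : ContDiff ℝ (⊤ : ℕ∞) (Function.uncurry γ)) (hg : ∀ t u, 0 < pg γ t u)
    (t u : ℝ) : fcfVel γ θ t u = Vf γ θ (t, u) := by
  simp only [fcfVel, Vf, ds_tang_eq hγ hg, tang_eq hγ]

lemma hV (hγ : ContDiff ℝ (⊤ : ℕ∞) (Function.uncurry γ)) (hθ : ContDiff ℝ (⊤ : ℕ∞) (Function.uncurry θ))
    (hg : ∀ t u, 0 < pg γ t u) : ContDiff ℝ (⊤ : ℕ∞) (Vf γ θ) := by
  have hθ' : ContDiff ℝ (⊤ : ℕ∞) (fun p : ℝ × ℝ => θ p.1 p.2) := hθ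
  have hcr : ContDiff ℝ (⊤ : ℕ∞) (fun p : ℝ × ℝ => cross (Tf γ p) (Kf γ p)) :=
    contDiff_cross.comp ((hT hγ hg).prodMk (hK hγ hg))
  exact ((Real.contDiff_cos.comp hθ').smul (hK hγ hg)).add
    ((Real.contDiff_sin.comp hθ').smul hcr)

lemma norm_Tf (hγ : ContDiff ℝ (⊤ : ℕ∞) (Function.uncurry γ)) (hg : ∀ t u, 0 < pg γ t u)
    (p : ℝ × ℝ) : ‖Tf γ p‖ = 1 := by
  have hGp := Gf_pos hγ hg p
  rw [Tf, norm_smul, norm_inv, Real.norm_eq_abs, abs_of_pos hGp]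
  exact inv_mul_cancel₀ hGp.ne'

lemma inner_TuF_Tf (hγ : ContDiff ℝ (⊤ : ℕ∞) (Function.uncurry γ)) (hg : ∀ t u, 0 < pg γ t u)
    (t u : ℝ) : ⟪TuF γ (t, u), Tf γ (t, u)⟫ = 0 := by
  have hdT := hasDerivAt_Tf_u hγ hg t u
  have h1 : HasDerivAt (fun u' => ⟪Tf γ (t, u'), Tf γ (t, u')⟫)
      (⟪Tf γ (t, u), TuF γ (t, u)⟫ + ⟪TuF γ (t, u), Tf γ (t, u)⟫) u := hdT.inner ℝ hdT
  have h2 : (fun u' => ⟪Tf γ (t, u'), Tf γ (t, u')⟫) = fun _ : ℝ => (1:ℝ) := by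
    funext u'
    rw [real_inner_self_eq_norm_sq, norm_Tf hγ hg]
    norm_num
  rw [h2] at h1
  have h3 := h1.unique (hasDerivAt_const u (1:ℝ))
  rw [real_inner_comm]
  rw [real_inner_comm (Tf γ (t, u))] at h3
  linarith

lemma inner_Kf_Tf (hγ : ContDiff ℝ (⊤ : ℕ∞) (Function.uncurry γ)) (hg : ∀ t u, 0 < pg γ t u)
    (t u : ℝ) : ⟪Kf γ (t, u), Tf γ (t, u)⟫ = 0 := by
  rw [Kf, real_inner_smul_left, inner_TuF_Tf hγ hg, mul_zero]

lemma inner_Vf_Tf (hγ : ContDiff ℝ (⊤ : ℕ∞) (Function.uncurry γ)) (hg : ∀ t u, 0 < pg γ t u)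
    (t u : ℝ) : ⟪Vf γ θ (t, u), Tf γ (t, u)⟫ = 0 := by
  rw [Vf, inner_add_left, real_inner_smul_left, real_inner_smul_left,
    inner_Kf_Tf hγ hg, inner_cross_left]
  ring

lemma inner_Vf_Kf (hγ : ContDiff ℝ (⊤ : ℕ∞) (Function.uncurry γ)) (hg : ∀ t u, 0 < pg γ t u)
    (t u : ℝ) :
    ⟪Vf γ θ (t, u), Kf γ (t, u)⟫ = Real.cos (θ t u) * ‖Kf γ (t, u)‖ ^ 2 := by
  rw [Vf, inner_add_left, real_inner_smul_left, real_inner_smul_left,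
    inner_cross_right, real_inner_self_eq_norm_sq]
  ring

lemma TuF_eq_smul_Kf (hγ : ContDiff ℝ (⊤ : ℕ∞) (Function.uncurry γ)) (hg : ∀ t u, 0 < pg γ t u)
    (p : ℝ × ℝ) : TuF γ p = Gf γ p • Kf γ p := by
  rw [Kf, smul_smul, mul_inv_cancel₀ (Gf_pos hγ hg p).ne', one_smul]

lemma Pf_eq_smul_Tf (hγ : ContDiff ℝ (⊤ : ℕ∞) (Function.uncurry γ)) (hg : ∀ t u, 0 < pg γ t u)
    (p : ℝ × ℝ) : Pf γ p = Gf γ p • Tf γ p := by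
  rw [Tf, smul_smul, mul_inv_cancel₀ (Gf_pos hγ hg p).ne', one_smul]

end FCFAux
namespace FCFAux

variable {γ : ℝ → ℝ → E3} {θ : ℝ → ℝ → ℝ}

lemma hasDerivAt_clm_apply_fst {F : ℝ × ℝ → (ℝ × ℝ) →L[ℝ] E3} {t u : ℝ}
    (hF : DifferentiableAt ℝ F (t, u)) (v : ℝ × ℝ) :
    HasDerivAt (fun t' => F (t', u) v) (fderiv ℝ F (t, u) ((1:ℝ), (0:ℝ)) v) t :=
  (ContinuousLinearMap.apply ℝ E3 v).hasFDerivAt.comp_hasDerivAt t (hasDerivAt_partial_fst hF)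

lemma hasDerivAt_clm_apply_snd {F : ℝ × ℝ → (ℝ × ℝ) →L[ℝ] E3} {t u : ℝ}
    (hF : DifferentiableAt ℝ F (t, u)) (v : ℝ × ℝ) :
    HasDerivAt (fun u' => F (t, u') v) (fderiv ℝ F (t, u) ((0:ℝ), (1:ℝ)) v) u :=
  (ContinuousLinearMap.apply ℝ E3 v).hasFDerivAt.comp_hasDerivAt u (hasDerivAt_partial_snd hF)

lemma key (hγ : ContDiff ℝ (⊤ : ℕ∞) (Function.uncurry γ)) (hθ : ContDiff ℝ (⊤ : ℕ∞) (Function.uncurry θ))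
    (hg : ∀ t u, 0 < pg γ t u) {Tend : ℝ}
    (hflow : ∀ t ∈ Set.Ico (0:ℝ) Tend, ∀ u, pt γ t u = fcfVel γ θ t u) :
    ∀ t ∈ Set.Ico (0:ℝ) Tend, ∀ u,
      Hf γ (t, u) = -((curv γ t u) ^ 2 * Real.cos (θ t u) * pg γ t u) := by
  intro t ht u
  have hAc : ContDiff ℝ (⊤ : ℕ∞) (fderiv ℝ (Function.uncurry γ)) := hγ.fderiv_right (by simp)
  have hAd : DifferentiableAt ℝ (fderiv ℝ (Function.uncurry γ)) (t, u) :=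
    hAc.differentiable (by simp) (t, u)
  have hsymm : fderiv ℝ (fderiv ℝ (Function.uncurry γ)) (t, u) ((1:ℝ), (0:ℝ)) ((0:ℝ), (1:ℝ))
      = fderiv ℝ (fderiv ℝ (Function.uncurry γ)) (t, u) ((0:ℝ), (1:ℝ)) ((1:ℝ), (0:ℝ)) :=
    second_derivative_symmetric (fun y => (hγ.differentiable (by simp) y).hasFDerivAt)
      hAd.hasFDerivAt _ _
  -- the u-derivative of the velocity field
  have hVu : HasDerivAt (fun u' => Vf γ θ (t, u'))
      (fderiv ℝ (fderiv ℝ (Function.uncurry γ)) (t, u) ((0:ℝ), (1:ℝ)) ((1:ℝ), (0:ℝ))) u := by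
    have h1 := hasDerivAt_clm_apply_snd hAd ((1:ℝ), (0:ℝ))
    have h2 : (fun u' => fderiv ℝ (Function.uncurry γ) (t, u') ((1:ℝ), (0:ℝ)))
        = fun u' => Vf γ θ (t, u') := by
      funext u'
      rw [← pt_eq hγ, hflow t ht u', fcfVel_eq hγ hg]
    rwa [h2] at h1
  -- the t-derivative of Pf equals the same vector, by symmetry of second derivatives
  have hPt : HasDerivAt (fun t' => Pf γ (t', u))
      (fderiv ℝ (fderiv ℝ (Function.uncurry γ)) (t, u) ((0:ℝ), (1:ℝ)) ((1:ℝ), (0:ℝ))) t := by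
    have h1 := hasDerivAt_clm_apply_fst hAd ((0:ℝ), (1:ℝ))
    rw [hsymm] at h1
    exact h1
  have hPu : HasDerivAt (fun u' => Pf γ (t, u')) (fderiv ℝ (Pf γ) (t, u) ((0:ℝ), (1:ℝ))) u :=
    hasDerivAt_partial_snd ((hP hγ).differentiable (by simp) (t, u))
  -- decomposition of the u-derivative of Pf
  have hGu : HasDerivAt (fun u' => Gf γ (t, u')) (fderiv ℝ (Gf γ) (t, u) ((0:ℝ), (1:ℝ))) u :=
    hasDerivAt_partial_snd ((hGc hγ hg).differentiable (by simp) (t, u))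
  have hsmul : HasDerivAt (fun u' => Gf γ (t, u') • Tf γ (t, u'))
      (Gf γ (t, u) • TuF γ (t, u) + (fderiv ℝ (Gf γ) (t, u) ((0:ℝ), (1:ℝ))) • Tf γ (t, u)) u :=
    hGu.smul (hasDerivAt_Tf_u hγ hg t u)
  have hPu_eq : fderiv ℝ (Pf γ) (t, u) ((0:ℝ), (1:ℝ))
      = Gf γ (t, u) • TuF γ (t, u) + (fderiv ℝ (Gf γ) (t, u) ((0:ℝ), (1:ℝ))) • Tf γ (t, u) := by
    have h2 : (fun u' => Gf γ (t, u') • Tf γ (t, u')) = fun u' => Pf γ (t, u') := by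
      funext u'; rw [← Pf_eq_smul_Tf hγ hg]
    rw [h2] at hsmul
    exact hPu.unique hsmul
  -- ⟪V, P⟫ vanishes identically
  have hVP : ∀ u', ⟪Vf γ θ (t, u'), Pf γ (t, u')⟫ = 0 := by
    intro u'
    rw [Pf_eq_smul_Tf hγ hg, real_inner_smul_right, inner_Vf_Tf hγ hg, mul_zero]
  have hψ : HasDerivAt (fun u' => ⟪Vf γ θ (t, u'), Pf γ (t, u')⟫)
      (⟪Vf γ θ (t, u), fderiv ℝ (Pf γ) (t, u) ((0:ℝ), (1:ℝ))⟫ +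
        ⟪(fderiv ℝ (fderiv ℝ (Function.uncurry γ)) (t, u) ((0:ℝ), (1:ℝ))) ((1:ℝ), (0:ℝ)),
          Pf γ (t, u)⟫) u := hVu.inner ℝ hPu
  rw [funext hVP] at hψ
  have hsum := hψ.unique (hasDerivAt_const u (0:ℝ))
  have hVPu : ⟪Vf γ θ (t, u), fderiv ℝ (Pf γ) (t, u) ((0:ℝ), (1:ℝ))⟫
      = Real.cos (θ t u) * ‖Kf γ (t, u)‖ ^ 2 * (Gf γ (t, u)) ^ 2 := by
    rw [hPu_eq, inner_add_right, real_inner_smul_right, real_inner_smul_right,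
      inner_Vf_Tf hγ hg, TuF_eq_smul_Kf hγ hg, real_inner_smul_right, inner_Vf_Kf hγ hg]
    ring
  have hWP : ⟪(fderiv ℝ (fderiv ℝ (Function.uncurry γ)) (t, u) ((0:ℝ), (1:ℝ))) ((1:ℝ), (0:ℝ)),
      Pf γ (t, u)⟫ = -(Real.cos (θ t u) * ‖Kf γ (t, u)‖ ^ 2 * (Gf γ (t, u)) ^ 2) := by
    linarith [hsum, hVPu]
  -- identify Hf with the derivative of the norm
  have hGt : HasDerivAt (fun t' => Gf γ (t', u)) (Hf γ (t, u)) t :=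
    hasDerivAt_partial_fst ((hGc hγ hg).differentiable (by simp) (t, u))
  have hnorm : HasDerivAt (fun t' => Gf γ (t', u))
      (⟪(fderiv ℝ (fderiv ℝ (Function.uncurry γ)) (t, u) ((0:ℝ), (1:ℝ))) ((1:ℝ), (0:ℝ)),
        Pf γ (t, u)⟫ / ‖Pf γ (t, u)‖) t :=
    hasDerivAt_norm_comp hPt (Pf_ne hγ hg (t, u))
  have hHf := hGt.unique hnorm
  rw [hHf, hWP, curv_eq hγ hg, pg_eq hγ]
  have hGp := Gf_pos hγ hg (t, u)
  have hN : ‖Pf γ (t, u)‖ = Gf γ (t, u) := rfl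
  rw [hN]
  field_simp

end FCFAux
open FCFAux

/-- Under the framed curvature flow, the length satisfies
`d/dt L(Γ_t) = −∫₀^{2π} κ² cos θ · g du`. -/
theorem framed_curvature_flow_length_derivative
    (Tend : ℝ) (hTend : 0 < Tend) (γ : ℝ → ℝ → E3) (θ : ℝ → ℝ → ℝ)
    (hγ : ContDiff ℝ (⊤ : ℕ∞) (Function.uncurry γ))
    (hθ : ContDiff ℝ (⊤ : ℕ∞) (Function.uncurry θ))
    (hγper : ∀ t u, γ t (u + 2 * π) = γ t u)
    (hθper : ∀ t u, θ t (u + 2 * π) = θ t u)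
    (hg : ∀ t u, 0 < pg γ t u)
    (hflow : ∀ t ∈ Set.Ico (0:ℝ) Tend, ∀ u, pt γ t u = fcfVel γ θ t u) :
    ∀ t ∈ Set.Ico (0:ℝ) Tend,
      deriv (len γ) t
        = -∫ u in (0:ℝ)..(2 * π), (curv γ t u) ^ 2 * Real.cos (θ t u) * pg γ t u := by

  intro t₀ ht₀
  have hGC := FCFAux.hGc hγ hg
  have hHcd : ContDiff ℝ (⊤ : ℕ∞) (Hf γ) := (hGC.fderiv_right (by simp)).clm_apply contDiff_const
  have hHc : Continuous (Hf γ) := hHcd.continuous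
  obtain ⟨C, hC⟩ := IsCompact.exists_bound_of_continuousOn
    ((isCompact_closedBall t₀ 1).prod (isCompact_uIcc (a := (0:ℝ)) (b := 2 * π)))
    hHc.continuousOn
  have hmain := intervalIntegral.hasDerivAt_integral_of_dominated_loc_of_deriv_le
    (F := fun x u => Gf γ (x, u)) (F' := fun x u => Hf γ (x, u)) (x₀ := t₀)
    (a := (0:ℝ)) (b := 2 * π) (bound := fun _ => C) (s := Metric.ball t₀ 1) (μ := MeasureTheory.volume)
    (Metric.ball_mem_nhds t₀ one_pos)
    (Filter.Eventually.of_forall fun x =>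
      ((hGC.continuous.comp (Continuous.prodMk_right x)).aestronglyMeasurable))
    ((hGC.continuous.comp (Continuous.prodMk_right t₀)).intervalIntegrable _ _)
    ((hHc.comp (Continuous.prodMk_right t₀)).aestronglyMeasurable)
    (MeasureTheory.ae_of_all _ fun u hu x hx =>
      hC (x, u) ⟨Metric.ball_subset_closedBall hx, Set.Ioc_subset_Icc_self hu⟩)
    intervalIntegrable_const
    (MeasureTheory.ae_of_all _ fun u _ x _ =>
      hasDerivAt_partial_fst (hGC.differentiable (by simp) (x, u)))
  have hlen : len γ = fun x => ∫ u in (0:ℝ)..(2 * π), Gf γ (x, u) := by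
    funext x
    simp only [len, FCFAux.pg_eq hγ]
  rw [hlen, hmain.2.deriv]
  rw [show (∫ u in (0:ℝ)..(2 * π), Hf γ (t₀, u))
      = ∫ u in (0:ℝ)..(2 * π), -((curv γ t₀ u) ^ 2 * Real.cos (θ t₀ u) * pg γ t₀ u) from
    intervalIntegral.integral_congr fun u _ => FCFAux.key hγ hθ hg hflow t₀ ht₀ u]
  rw [intervalIntegral.integral_neg]
end
end
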